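/- Let S ⊆ [m] × [n] with G_S doubly chordal bipartite, fix a column j₀, and let P(j₀) be the poset of maximal cliques intersecting column j₀, ordered by containment of their row sets within the nonzero rows of column j₀. Then P(j₀) has a unique maximal element D₀ with rows(D₀) = rows(j₀), and every element of P(j₀) is covered by at most one element; in particular the Hasse diagram of P(j₀) is a rooted tree. -/
import Mathlib


open Finset

open scoped Classical

/-- The bipartite graph associated to `S ⊆ [m] × [n]`. -/
def qiGraph (m n : ℕ) (S : Finset (Fin m × Fin n)) : SimpleGraph (Fin m ⊕ Fin n) :=
  SimpleGraph.fromRel (fun a b =>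
    ∃ p : Fin m × Fin n, p ∈ S ∧ a = Sum.inl p.1 ∧ b = Sum.inr p.2)

/-- A chord of a closed walk: an edge of `G` between vertices of the walk that is not
an edge of the walk. -/
def IsChord {V : Type*} (G : SimpleGraph V) {v : V} (c : G.Walk v v) (e : Sym2 V) : Prop :=
  e ∈ G.edgeSet ∧ e ∉ c.edges ∧ ∀ x ∈ e, x ∈ c.support

/-- Every cycle of length at least 6 has at least one chord. -/
def ChordalBipartite {V : Type*} (G : SimpleGraph V) : Prop :=
  ∀ (v : V) (c : G.Walk v v), c.IsCycle → 6 ≤ c.length → ∃ e : Sym2 V, IsChord G c e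

/-- Every cycle of length at least 6 has at least two chords. -/
def DoublyChordalBipartite {V : Type*} (G : SimpleGraph V) : Prop :=
  ∀ (v : V) (c : G.Walk v v), c.IsCycle → 6 ≤ c.length →
    ∃ e₁ e₂ : Sym2 V, e₁ ≠ e₂ ∧ IsChord G c e₁ ∧ IsChord G c e₂

variable {m n : ℕ}

/-- A (nonempty) clique in `S`: a subset of `S` of the form `R × T`. -/
def IsGridClique (S C : Finset (Fin m × Fin n)) : Prop :=
  C.Nonempty ∧ C ⊆ S ∧ ∀ p ∈ C, ∀ q ∈ C, (p.1, q.2) ∈ C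

/-- A maximal clique in `S`. -/
def IsMaxClique (S C : Finset (Fin m × Fin n)) : Prop :=
  IsGridClique S C ∧ ∀ C', IsGridClique S C' → C ⊆ C' → C = C'

/-- `Max(S)`: the set of maximal cliques of `S`. -/
noncomputable def maxCliques (S : Finset (Fin m × Fin n)) : Finset (Finset (Fin m × Fin n)) :=
  S.powerset.filter (IsMaxClique S)

/-- `Max(x)`: maximal cliques containing the index `x`. -/
noncomputable def maxCliquesAt (S : Finset (Fin m × Fin n)) (x : Fin m × Fin n) :
    Finset (Finset (Fin m × Fin n)) :=
  (maxCliques S).filter (fun D => x ∈ D)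

/-- Pairwise intersections of distinct maximal cliques of `S`. -/
noncomputable def pairInts (S : Finset (Fin m × Fin n)) : Finset (Finset (Fin m × Fin n)) :=
  ((maxCliques S ×ˢ maxCliques S).filter (fun P => P.1 ≠ P.2)).image (fun P => P.1 ∩ P.2)

/-- `Int(S)`: containment-maximal pairwise intersections of maximal cliques of `S`. -/
noncomputable def maxInts (S : Finset (Fin m × Fin n)) : Finset (Finset (Fin m × Fin n)) :=
  (pairInts S).filter (fun C => ∀ C' ∈ pairInts S, C ⊆ C' → C = C')

/-- Pairwise intersections of distinct elements of `Max(x)`. -/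
noncomputable def pairIntsAt (S : Finset (Fin m × Fin n)) (x : Fin m × Fin n) :
    Finset (Finset (Fin m × Fin n)) :=
  ((maxCliquesAt S x ×ˢ maxCliquesAt S x).filter (fun P => P.1 ≠ P.2)).image
    (fun P => P.1 ∩ P.2)

/-- `Int(x)`: containment-maximal pairwise intersections of elements of `Max(x)`. -/
noncomputable def maxIntsAt (S : Finset (Fin m × Fin n)) (x : Fin m × Fin n) :
    Finset (Finset (Fin m × Fin n)) :=
  (pairIntsAt S x).filter (fun C => ∀ C' ∈ pairIntsAt S x, C ⊆ C' → C = C')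

/-- The rows of column `j` that are also nonzero rows of column `j₀`. -/
noncomputable def colRows (S : Finset (Fin m × Fin n)) (j₀ j : Fin n) : Finset (Fin m) :=
  Finset.univ.filter (fun i => (i, j) ∈ S ∧ (i, j₀) ∈ S)

/-- The clique induced by the block (w.r.t. column `j₀`) of the column `j`. -/
noncomputable def inducedClique (S : Finset (Fin m × Fin n)) (j₀ j : Fin n) :
    Finset (Fin m × Fin n) :=
  Finset.univ.filter (fun p => p.1 ∈ colRows S j₀ j ∧ colRows S j₀ j ⊆ colRows S j₀ p.2)

/-- The row indices of a subset of `S`. -/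
noncomputable def rowsOf (D : Finset (Fin m × Fin n)) : Finset (Fin m) := D.image Prod.fst

/-- An element of the poset `P(j₀)`: a maximal clique of `S` meeting column `j₀`. -/
def PNode (S : Finset (Fin m × Fin n)) (j₀ : Fin n) (D : Finset (Fin m × Fin n)) : Prop :=
  IsMaxClique S D ∧ ∃ i, (i, j₀) ∈ D

/-- `PCovers S j₀ Dβ Dα` means `Dα ⋖ Dβ` in the poset `P(j₀)` (ordered by
containment of row sets). -/
def PCovers (S : Finset (Fin m × Fin n)) (j₀ : Fin n) (Dβ Dα : Finset (Fin m × Fin n)) : Prop :=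
  PNode S j₀ Dα ∧ PNode S j₀ Dβ ∧ rowsOf Dα ⊂ rowsOf Dβ ∧
    ¬ ∃ Dγ, PNode S j₀ Dγ ∧ rowsOf Dα ⊂ rowsOf Dγ ∧ rowsOf Dγ ⊂ rowsOf Dβ

/-- `C⁺`: the sum of the entries of `u` indexed by `C`. -/
def cliqueSum (u : Fin m × Fin n → ℝ) (C : Finset (Fin m × Fin n)) : ℝ := ∑ x ∈ C, u x

/-- `u_{i+}`: the `i`-th row marginal of `u` over `S`. -/
noncomputable def rowMarg (S : Finset (Fin m × Fin n)) (u : Fin m × Fin n → ℝ) (i : Fin m) : ℝ :=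
  ∑ x ∈ S.filter (fun x => x.1 = i), u x

/-- `u_{+j}`: the `j`-th column marginal of `u` over `S`. -/
noncomputable def colMarg (S : Finset (Fin m × Fin n)) (u : Fin m × Fin n → ℝ) (j : Fin n) : ℝ :=
  ∑ x ∈ S.filter (fun x => x.2 = j), u x

/-- `u_{++}`: the total sum of `u` over `S`. -/
def totalSum (S : Finset (Fin m × Fin n)) (u : Fin m × Fin n → ℝ) : ℝ := ∑ x ∈ S, u x

-- ====== helpers ======

lemma qiGraph_adj {S : Finset (Fin m × Fin n)} {i : Fin m} {j : Fin n} :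
    (qiGraph m n S).Adj (Sum.inl i) (Sum.inr j) ↔ (i, j) ∈ S := by
  simp [qiGraph, SimpleGraph.fromRel_adj]

lemma qiGraph_adj' {S : Finset (Fin m × Fin n)} {x y : Fin m ⊕ Fin n}
    (h : (qiGraph m n S).Adj x y) :
    ∃ i j, (i, j) ∈ S ∧ (x = Sum.inl i ∧ y = Sum.inr j ∨ x = Sum.inr j ∧ y = Sum.inl i) := by
  rw [qiGraph, SimpleGraph.fromRel_adj] at h
  obtain ⟨-, h | h⟩ := h
  · obtain ⟨p, hp, hx, hy⟩ := h; exact ⟨p.1, p.2, hp, Or.inl ⟨hx, hy⟩⟩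
  · obtain ⟨p, hp, hy, hx⟩ := h; exact ⟨p.1, p.2, hp, Or.inr ⟨hx, hy⟩⟩

noncomputable def cliqueOf (S : Finset (Fin m × Fin n)) (R : Finset (Fin m)) :
    Finset (Fin m × Fin n) :=
  Finset.univ.filter (fun p => p.1 ∈ R ∧ ∀ i ∈ R, (i, p.2) ∈ S)

lemma mem_cliqueOf {S : Finset (Fin m × Fin n)} {R : Finset (Fin m)} {p : Fin m × Fin n} :
    p ∈ cliqueOf S R ↔ p.1 ∈ R ∧ ∀ i ∈ R, (i, p.2) ∈ S := by
  simp [cliqueOf]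

lemma mem_rowsOf {D : Finset (Fin m × Fin n)} {i : Fin m} :
    i ∈ rowsOf D ↔ ∃ j, (i, j) ∈ D := by
  constructor
  · intro h
    rw [rowsOf, Finset.mem_image] at h
    obtain ⟨q, hq, rfl⟩ := h
    exact ⟨q.2, hq⟩
  · rintro ⟨j, hj⟩
    exact Finset.mem_image_of_mem _ hj

lemma pnode_eq_cliqueOf {S : Finset (Fin m × Fin n)} {j₀ : Fin n} {D : Finset (Fin m × Fin n)}
    (hD : PNode S j₀ D) : D = cliqueOf S (rowsOf D) := by
  obtain ⟨⟨⟨hne, hsub, hclosed⟩, hmax⟩, i₀, hi₀⟩ := hD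
  have hsub' : D ⊆ cliqueOf S (rowsOf D) := by
    intro p hp
    rw [mem_cliqueOf]
    refine ⟨Finset.mem_image_of_mem _ hp, ?_⟩
    intro i hi
    obtain ⟨j, hj⟩ := mem_rowsOf.mp hi
    exact hsub (hclosed _ hj p hp)
  refine hmax _ ⟨hne.mono hsub', ?_, ?_⟩ hsub'
  · intro p hp
    rw [mem_cliqueOf] at hp
    simpa using hp.2 p.1 hp.1
  · intro p hp q hq
    rw [mem_cliqueOf] at hp hq ⊢
    exact ⟨hp.1, hq.2⟩

lemma pnode_rows_subset {S : Finset (Fin m × Fin n)} {j₀ : Fin n} {D : Finset (Fin m × Fin n)}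
    (hD : PNode S j₀ D) {i : Fin m} (hi : i ∈ rowsOf D) : (i, j₀) ∈ S := by
  obtain ⟨⟨⟨hne, hsub, hclosed⟩, hmax⟩, i₀, hi₀⟩ := hD
  obtain ⟨j, hj⟩ := mem_rowsOf.mp hi
  exact hsub (hclosed _ hj _ hi₀)

lemma pnode_d0 {S : Finset (Fin m × Fin n)} {j₀ : Fin n} (hne : ∃ i, (i, j₀) ∈ S) :
    PNode S j₀ (cliqueOf S (Finset.univ.filter (fun i : Fin m => (i, j₀) ∈ S))) ∧
    rowsOf (cliqueOf S (Finset.univ.filter (fun i : Fin m => (i, j₀) ∈ S))) =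
      Finset.univ.filter (fun i : Fin m => (i, j₀) ∈ S) := by
  set R₀ := Finset.univ.filter (fun i : Fin m => (i, j₀) ∈ S) with hR₀
  obtain ⟨i₀, hi₀⟩ := hne
  have hR₀mem : ∀ i, i ∈ R₀ ↔ (i, j₀) ∈ S := by intro i; simp [hR₀]
  have hbase : ∀ i ∈ R₀, (i, j₀) ∈ cliqueOf S R₀ := by
    intro i hi
    rw [mem_cliqueOf]
    exact ⟨hi, fun i' hi' => (hR₀mem i').mp hi'⟩
  have hi₀R : i₀ ∈ R₀ := (hR₀mem i₀).mpr hi₀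
  have hgrid : IsGridClique S (cliqueOf S R₀) := by
    refine ⟨⟨(i₀, j₀), hbase i₀ hi₀R⟩, ?_, ?_⟩
    · intro p hp
      rw [mem_cliqueOf] at hp
      simpa using hp.2 p.1 hp.1
    · intro p hp q hq
      rw [mem_cliqueOf] at hp hq ⊢
      exact ⟨hp.1, hq.2⟩
  have hmax : IsMaxClique S (cliqueOf S R₀) := by
    refine ⟨hgrid, ?_⟩
    intro C' hC' hsub
    obtain ⟨hne', hsubS, hclosed⟩ := hC'
    refine Finset.Subset.antisymm hsub ?_
    intro p hp
    rw [mem_cliqueOf]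
    constructor
    · rw [hR₀mem]
      exact hsubS (hclosed p hp _ (hsub (hbase i₀ hi₀R)))
    · intro i hi
      exact hsubS (hclosed _ (hsub (hbase i hi)) p hp)
  have hrows : rowsOf (cliqueOf S R₀) = R₀ := by
    apply Finset.Subset.antisymm
    · intro i hi
      obtain ⟨j, hj⟩ := mem_rowsOf.mp hi
      exact (mem_cliqueOf.mp hj).1
    · intro i hi
      exact mem_rowsOf.mpr ⟨j₀, hbase i hi⟩
  exact ⟨⟨hmax, i₀, hbase i₀ hi₀R⟩, hrows⟩

lemma exists_col {S : Finset (Fin m × Fin n)} {j₀ : Fin n} {E : Finset (Fin m × Fin n)}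
    (hE : PNode S j₀ E) {b : Fin m} (hbE : b ∉ rowsOf E) :
    ∃ j, (∀ i ∈ rowsOf E, (i, j) ∈ S) ∧ (b, j) ∉ S := by
  by_contra hcon
  push_neg at hcon
  apply hbE
  have hEeq := pnode_eq_cliqueOf hE
  obtain ⟨⟨⟨hne, hsubS, hclosed⟩, hmax⟩, i₀, hi₀⟩ := hE
  set R' := insert b (rowsOf E) with hR'
  have hsub' : E ⊆ cliqueOf S R' := by
    intro p hp
    have hp' := mem_cliqueOf.mp (hEeq ▸ hp)
    rw [mem_cliqueOf]
    refine ⟨Finset.mem_insert_of_mem hp'.1, ?_⟩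
    intro i hi
    rcases Finset.mem_insert.mp hi with rfl | hi
    · exact hcon p.2 hp'.2
    · exact hp'.2 i hi
  have heq : E = cliqueOf S R' := by
    refine hmax _ ⟨hne.mono hsub', ?_, ?_⟩ hsub'
    · intro p hp
      rw [mem_cliqueOf] at hp
      simpa using hp.2 p.1 hp.1
    · intro p hp q hq
      rw [mem_cliqueOf] at hp hq ⊢
      exact ⟨hp.1, hq.2⟩
  obtain ⟨p, hp⟩ := hne
  have : (b, p.2) ∈ cliqueOf S R' := by
    rw [mem_cliqueOf]
    exact ⟨Finset.mem_insert_self _ _, (mem_cliqueOf.mp (hsub' hp)).2⟩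
  exact mem_rowsOf.mpr ⟨p.2, heq ▸ this⟩

lemma pnode_rows_nested {S : Finset (Fin m × Fin n)}
    (hS : DoublyChordalBipartite (qiGraph m n S)) {j₀ : Fin n}
    {E F : Finset (Fin m × Fin n)} (hE : PNode S j₀ E) (hF : PNode S j₀ F)
    (hint : (rowsOf E ∩ rowsOf F).Nonempty) :
    rowsOf E ⊆ rowsOf F ∨ rowsOf F ⊆ rowsOf E := by
  by_contra hcon
  push_neg at hcon
  obtain ⟨a, haE, haF⟩ := Finset.not_subset.mp hcon.1
  obtain ⟨b, hbF, hbE⟩ := Finset.not_subset.mp hcon.2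
  obtain ⟨c, hc⟩ := hint
  obtain ⟨hcE, hcF⟩ := Finset.mem_inter.mp hc
  obtain ⟨jE, hjE, hbjE⟩ := exists_col hE hbE
  obtain ⟨jF, hjF, hajF⟩ := exists_col hF haF
  -- S memberships
  have haj0 : (a, j₀) ∈ S := pnode_rows_subset hE haE
  have hbj0 : (b, j₀) ∈ S := pnode_rows_subset hF hbF
  have hcj0 : (c, j₀) ∈ S := pnode_rows_subset hE hcE
  have hajE : (a, jE) ∈ S := hjE a haE
  have hcjE : (c, jE) ∈ S := hjE c hcE
  have hbjF : (b, jF) ∈ S := hjF b hbF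
  have hcjF : (c, jF) ∈ S := hjF c hcF
  -- distinctness
  have hab : a ≠ b := fun h => hbE (h ▸ haE)
  have hac : a ≠ c := fun h => haF (h ▸ hcF)
  have hbc : b ≠ c := fun h => hbE (h ▸ hcE)
  have hj0jE : j₀ ≠ jE := fun h => hbjE (h ▸ hbj0)
  have hj0jF : j₀ ≠ jF := fun h => hajF (h ▸ haj0)
  have hjEjF : jE ≠ jF := fun h => hajF (h ▸ hajE)
  -- the 6-cycle
  set G := qiGraph m n S with hG
  have h1 : G.Adj (Sum.inl a) (Sum.inr j₀) := qiGraph_adj.mpr haj0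
  have h2 : G.Adj (Sum.inr j₀) (Sum.inl b) := (qiGraph_adj.mpr hbj0).symm
  have h3 : G.Adj (Sum.inl b) (Sum.inr jF) := qiGraph_adj.mpr hbjF
  have h4 : G.Adj (Sum.inr jF) (Sum.inl c) := (qiGraph_adj.mpr hcjF).symm
  have h5 : G.Adj (Sum.inl c) (Sum.inr jE) := qiGraph_adj.mpr hcjE
  have h6 : G.Adj (Sum.inr jE) (Sum.inl a) := (qiGraph_adj.mpr hajE).symm
  let w : G.Walk (Sum.inl a) (Sum.inl a) :=
    .cons h1 (.cons h2 (.cons h3 (.cons h4 (.cons h5 (.cons h6 .nil)))))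
  have hsupp : w.support = [Sum.inl a, Sum.inr j₀, Sum.inl b, Sum.inr jF,
      Sum.inl c, Sum.inr jE, Sum.inl a] := by
    simp [w]
  have hedges : w.edges = [s(Sum.inl a, Sum.inr j₀), s(Sum.inr j₀, Sum.inl b),
      s(Sum.inl b, Sum.inr jF), s(Sum.inr jF, Sum.inl c), s(Sum.inl c, Sum.inr jE),
      s(Sum.inr jE, Sum.inl a)] := by
    simp [w]
  have hcyc : w.IsCycle := by
    rw [SimpleGraph.Walk.isCycle_def]
    refine ⟨⟨?_⟩, ?_, ?_⟩
    · rw [hedges]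
      simp [Sym2.eq_iff, hab, hac, hbc, hj0jE, hj0jF, hjEjF,
        hab.symm, hac.symm, hbc.symm, hj0jE.symm, hj0jF.symm, hjEjF.symm]
    · simp [w]
    · rw [hsupp]
      simp [hab, hac, hbc, hj0jE, hj0jF, hjEjF,
        hab.symm, hac.symm, hbc.symm, hj0jE.symm, hj0jF.symm, hjEjF.symm]
  have hlen : 6 ≤ w.length := by simp [w]
  obtain ⟨e₁, e₂, hne12, hch1, hch2⟩ := hS _ w hcyc hlen
  -- any chord must be s(inl c, inr j₀)
  have key : ∀ e, IsChord G w e → e = s(Sum.inl c, Sum.inr j₀) := by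
    intro e he
    obtain ⟨heE, heedges, hesupp⟩ := he
    induction e using Sym2.ind with
    | _ x y =>
      rw [SimpleGraph.mem_edgeSet] at heE
      obtain ⟨i, j, hij, hxy | hxy⟩ := qiGraph_adj' heE
      all_goals obtain ⟨hx, hy⟩ := hxy
      all_goals subst hx hy
      all_goals {
        have hi' : Sum.inl i ∈ w.support := hesupp _ (by simp)
        have hj' : Sum.inr j ∈ w.support := hesupp _ (by simp)
        rw [hsupp] at hi' hj'
        simp only [List.mem_cons, List.not_mem_nil, or_false, Sum.inl.injEq,
          Sum.inr.injEq, reduceCtorEq, false_or] at hi' hj'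
        rcases hi' with rfl|rfl|rfl|rfl <;> rcases hj' with rfl|rfl|rfl <;>
          first
            | exact absurd hij hajF
            | exact absurd hij hbjE
            | rfl
            | exact Sym2.eq_swap
            | (refine absurd ?_ heedges; rw [hedges]; simp [Sym2.eq_iff]) }
  exact hne12 ((key _ hch1).trans (key _ hch2).symm)

/-- if `G_S` is doubly chordal bipartite and column `j₀` is nonempty,
the poset `P(j₀)` of maximal cliques meeting column `j₀` (ordered by containment of row
sets) has a unique maximum element `D₀`, whose row set is the full set of nonzero rows
of column `j₀`, and every element of `P(j₀)` is covered by at most one element; hence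
the Hasse diagram of `P(j₀)` is a rooted tree. -/
theorem poset_is_rooted_tree (m n : ℕ) (S : Finset (Fin m × Fin n))
    (hS : DoublyChordalBipartite (qiGraph m n S)) (j₀ : Fin n)
    (hne : ∃ i, (i, j₀) ∈ S) :
    (∃! D₀ : Finset (Fin m × Fin n), PNode S j₀ D₀ ∧
      rowsOf D₀ = Finset.univ.filter (fun i : Fin m => (i, j₀) ∈ S) ∧
      ∀ D, PNode S j₀ D → rowsOf D ⊆ rowsOf D₀) ∧
    ∀ D E F : Finset (Fin m × Fin n),
      PCovers S j₀ E D → PCovers S j₀ F D → E = F := by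
  constructor
  · obtain ⟨hnode, hrows⟩ := pnode_d0 (S := S) (j₀ := j₀) hne
    refine ⟨cliqueOf S (Finset.univ.filter (fun i : Fin m => (i, j₀) ∈ S)),
      ⟨hnode, hrows, ?_⟩, ?_⟩
    · intro D hD
      rw [hrows]
      intro i hi
      simp only [Finset.mem_filter, Finset.mem_univ, true_and]
      exact pnode_rows_subset hD hi
    · rintro D' ⟨hD', hrows', -⟩
      rw [pnode_eq_cliqueOf hD', hrows']
  · intro D E F hED hFD
    obtain ⟨hD, hE, hDE, hnoE⟩ := hED
    obtain ⟨-, hF, hDF, hnoF⟩ := hFD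
    have hDne : (rowsOf D).Nonempty := by
      simpa [rowsOf] using hD.1.1.1.image Prod.fst
    have hint : (rowsOf E ∩ rowsOf F).Nonempty :=
      hDne.mono (Finset.subset_inter hDE.subset hDF.subset)
    have heq : rowsOf E = rowsOf F := by
      by_contra hne'
      rcases pnode_rows_nested hS hE hF hint with h | h
      · exact hnoF ⟨E, hE, hDE, h.ssubset_of_ne hne'⟩
      · exact hnoE ⟨F, hF, hDF, h.ssubset_of_ne (Ne.symm hne')⟩
    rw [pnode_eq_cliqueOf hE, pnode_eq_cliqueOf hF, heq]
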